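/- Let i ≥ 5, and suppose that for every j with 5 ≤ j ≤ i, the Fermat number N_j is the smallest positive integer m satisfying (c_j)^m ∈ L_{j−1}. Then O(a_i) = O(c_i) = ∏_{j=1}^{i} N_j. -/

import Mathlib

/-!
Write `L_{n-1}` for `conwayL c n`, a field with `q = 2^(2^n)` elements. Since `c_n` is a root of
`X² + X + a_{n-1}` lying outside `L_{n-1}`, the Frobenius `x ↦ x^q` of `L_{n-1}` sends it to the
other root `c_n + 1`, so `c_n^(N_n) = c_n (c_n + 1) = a_{n-1}`. When `N_n` is the least exponent
bringing `c_n` into `L_{n-1}` (automatic for `n ≤ 4`, where `N_n` is prime), it divides `O(c_n)`,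
whence `O(c_n) = N_n · O(a_{n-1})`. Finally `a_n = c_n^(N_n + 1)` and `N_n + 1` is coprime to
`N_1 ⋯ N_n`, so induction gives `O(a_n) = N_1 ⋯ N_n` for `n ≥ 1`.
-/

/-- The `j`-th Fermat number `N_j = 2^(2^j) + 1`. -/
def fermatN (j : ℕ) : ℕ := 2 ^ 2 ^ j + 1

/-- `conwayL c n` is the subfield `L_{n-1}` of the algebraic closure of `F_2`
generated over `F_2` by `c 0, …, c (n-1)`; in particular `conwayL c 0 = ⊥ = F_2`. -/
noncomputable def conwayL (c : ℕ → AlgebraicClosure (ZMod 2)) (n : ℕ) :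
    IntermediateField (ZMod 2) (AlgebraicClosure (ZMod 2)) :=
  IntermediateField.adjoin (ZMod 2) (c '' Set.Iio n)

open Polynomial IntermediateField

theorem Subfield.mem_of_pow_natCard_eq {L : Type*} [Field L] (K : Subfield L) [Finite K] {x : L}
    (hx : x ^ Nat.card K = x) : x ∈ K := by
  have := Fintype.ofFinite K
  rw [Nat.card_eq_fintype_card] at hx
  have hsplit : (X ^ Fintype.card K - X : K[X]).Splits := by
    rw [splits_iff_card_roots, FiniteField.roots_X_pow_card_sub_X,
      FiniteField.X_pow_card_sub_X_natDegree_eq K Fintype.one_lt_card]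
    rfl
  have hroot : x ∈ (Polynomial.map K.subtype (X ^ Fintype.card K - X)).roots := by
    rw [mem_roots_map (FiniteField.X_pow_card_sub_X_ne_zero K Fintype.one_lt_card)]
    simp [hx]
  rw [hsplit.roots_map] at hroot
  obtain ⟨y, -, rfl⟩ := Multiset.mem_map.mp hroot
  exact y.2

theorem pow_natCard_add_one_eq_of_sq_add_self_add_eq_zero {L : Type*} [Field L] (p : ℕ)
    [Fact p.Prime] [CharP L p] (K : Subfield L) [Finite K] {x a : L} (ha : a ∈ K)
    (hx : x ^ 2 + x + a = 0) (hxK : x ∉ K) : x ^ (Nat.card K + 1) = a := by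
  have := Fintype.ofFinite K
  obtain ⟨n, -, hcard⟩ := FiniteField.card K p
  rw [← Nat.card_eq_fintype_card] at hcard
  have hfix : a ^ Nat.card K = a := by
    simpa using congrArg Subtype.val (FiniteField.pow_card (⟨a, ha⟩ : K))
  have hconj : (x ^ Nat.card K) ^ 2 + x ^ Nat.card K + a = 0 := by
    have h := congrArg (iterateFrobenius L p n) hx
    simp only [map_add, map_pow, map_zero, iterateFrobenius_def, ← hcard, hfix] at h
    exact h
  have hne : x ^ Nat.card K - x ≠ 0 := sub_ne_zero.mpr fun h => hxK (K.mem_of_pow_natCard_eq h)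
  have hother : x ^ Nat.card K = -x - 1 := by
    apply eq_of_sub_eq_zero
    refine (mul_eq_zero.mp ?_).resolve_left hne
    linear_combination hconj - hx
  rw [pow_succ, hother]
  linear_combination -hx

theorem IntermediateField.finrank_adjoin_eq_two_of_sq_add_self_add_eq_zero {K L : Type*} [Field K]
    [Field L] [Algebra K L] {x : L} {a : K} (hx : x ^ 2 + x + algebraMap K L a = 0)
    (hxK : x ∉ (algebraMap K L).range) : Module.finrank K K⟮x⟯ = 2 := by
  set f : K[X] := X ^ 2 + X + C a
  have hf : f.Monic := by unfold f; monicity!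
  have hfdeg : f.natDegree = 2 := by unfold f; compute_degree!
  have hfx : aeval x f = 0 := by simpa [f] using hx
  have hint : IsIntegral K x := ⟨f, hf, hfx⟩
  rw [adjoin.finrank hint]
  refine le_antisymm ?_ ((minpoly.two_le_natDegree_iff hint).mpr hxK)
  exact hfdeg ▸ natDegree_le_of_dvd (minpoly.dvd K x hfx) hf.ne_zero

section LeastExponent

variable {L S : Type*} [DivisionRing L] [SetLike S L] [SubfieldClass S L] {K : S} {x : L} {d : ℕ}

theorem dvd_of_isLeast_pow_mem (hx : x ≠ 0) (hd : IsLeast {m | 0 < m ∧ x ^ m ∈ K} d) {m : ℕ}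
    (hm : x ^ m ∈ K) : d ∣ m := by
  obtain ⟨⟨hd0, hdK⟩, hleast⟩ := hd
  by_contra hndvd
  have hr0 : 0 < m % d := Nat.pos_of_ne_zero fun h => hndvd (Nat.dvd_of_mod_eq_zero h)
  have hsplit : x ^ (m % d) * (x ^ d) ^ (m / d) = x ^ m := by
    rw [← pow_mul, ← pow_add, Nat.mod_add_div]
  have hr : x ^ (m % d) ∈ K := by
    rw [← mul_inv_cancel_right₀ (pow_ne_zero (m / d) (pow_ne_zero d hx)) (x ^ (m % d)), hsplit]
    exact mul_mem hm (inv_mem (pow_mem hdK _))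
  exact (Nat.mod_lt m hd0).not_ge (hleast ⟨hr0, hr⟩)

theorem orderOf_eq_mul_orderOf_pow_of_isLeast (hx : x ≠ 0)
    (hd : IsLeast {m | 0 < m ∧ x ^ m ∈ K} d) : orderOf x = d * orderOf (x ^ d) := by
  have hdvd : d ∣ orderOf x := dvd_of_isLeast_pow_mem hx hd (by simp [one_mem])
  rw [orderOf_pow_of_dvd hd.1.1.ne' hdvd, Nat.mul_div_cancel' hdvd]

theorem isLeast_pow_mem_of_prime {p : ℕ} (hp : p.Prime) (hxp : x ^ p ∈ K) (hxK : x ∉ K) :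
    IsLeast {m | 0 < m ∧ x ^ m ∈ K} p := by
  have hx : x ≠ 0 := fun h => hxK (h ▸ zero_mem K)
  have hleast := isLeast_csInf (s := {m | 0 < m ∧ x ^ m ∈ K}) ⟨p, hp.pos, hxp⟩
  rcases hp.eq_one_or_self_of_dvd _ (dvd_of_isLeast_pow_mem hx hleast hxp) with h | h
  · exact absurd (by simpa [h] using hleast.1.2) hxK
  · exact h ▸ hleast

end LeastExponent

theorem fermatN_eq_fermatNumber : fermatN = Nat.fermatNumber := rfl

theorem fermatN_prime_of_le_four {j : ℕ} (hj : j ≤ 4) : (fermatN j).Prime := by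
  interval_cases j <;> norm_num [fermatN]

theorem coprime_fermatN_fermatN_add_one {k n : ℕ} (hk : k ≠ 0) (hkn : k ≤ n) :
    Nat.Coprime (fermatN k) (fermatN n + 1) := by
  rw [fermatN_eq_fermatNumber]
  rcases hkn.eq_or_lt with rfl | hlt
  · exact Nat.coprime_self_add_right.mpr (Nat.coprime_one_right _)
  · obtain ⟨t, ht⟩ : k.fermatNumber ∣ ∏ j ∈ Finset.range n, j.fermatNumber :=
      Finset.dvd_prod_of_mem _ (Finset.mem_range.mpr hlt)
    -- `N_n + 1 = N_0 ⋯ N_{n-1} + 3` and `3 = N_0` is coprime to `N_k`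
    rw [Nat.fermatNumber_eq_prod_add_two n, ht, add_assoc, add_comm,
      Nat.coprime_add_mul_left_right]
    exact Nat.coprime_fermatNumber_fermatNumber hk

theorem coprime_prod_fermatN_fermatN_add_one (n : ℕ) :
    Nat.Coprime (∏ j ∈ Finset.Icc 1 n, fermatN j) (fermatN n + 1) :=
  Nat.Coprime.prod_left fun _ hk =>
    coprime_fermatN_fermatN_add_one (Nat.one_le_iff_ne_zero.mp (Finset.mem_Icc.mp hk).1)
      (Finset.mem_Icc.mp hk).2

section ConwayTower

local notation "F" => AlgebraicClosure (ZMod 2)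

variable {c : ℕ → F}

/-- The defining conditions of Conway's tower, indexed so that the empty product at `n = 0`
gives `c 0 ^ 2 + c 0 + 1 = 0` and `c 0 ∉ F_2`. -/
structure IsConwayTower (c : ℕ → F) : Prop where
  sq_add_self_add_prod_eq_zero : ∀ n, c n ^ 2 + c n + ∏ j ∈ Finset.range n, c j = 0
  notMem_conwayL : ∀ n, c n ∉ conwayL c n

theorem conwayL_zero (c : ℕ → F) : conwayL c 0 = ⊥ := by
  simp [conwayL]

theorem conwayL_succ (c : ℕ → F) (n : ℕ) :
    conwayL c (n + 1) = (adjoin (conwayL c n) {c n}).restrictScalars (ZMod 2) := by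
  rw [conwayL, conwayL, adjoin_adjoin_left, ← Set.image_singleton, ← Set.image_union,
    Set.union_singleton, ← Order.Iio_succ_eq_insert, Order.succ_eq_add_one]

theorem prod_mem_conwayL (c : ℕ → F) (n : ℕ) : ∏ j ∈ Finset.range n, c j ∈ conwayL c n :=
  prod_mem fun j hj => subset_adjoin _ _ ⟨j, Finset.mem_range.mp hj, rfl⟩

instance (c : ℕ → F) (n : ℕ) : FiniteDimensional (ZMod 2) (conwayL c n) :=
  have : Finite (c '' Set.Iio n) := ((Set.finite_Iio n).image c).to_subtype
  finiteDimensional_adjoin fun x _ => Algebra.IsIntegral.isIntegral x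

instance (c : ℕ → F) (n : ℕ) : Finite (conwayL c n) :=
  Module.finite_of_finite (ZMod 2)

namespace IsConwayTower

theorem mk' (hc0 : c 0 ^ 2 + c 0 + 1 = 0)
    (hrec : ∀ i : ℕ, c (i + 1) ^ 2 + c (i + 1) + ∏ j ∈ Finset.range (i + 1), c j = 0)
    (hnot : ∀ i : ℕ, c (i + 1) ∉ conwayL c (i + 1)) : IsConwayTower c where
  sq_add_self_add_prod_eq_zero
    | 0 => by simpa using hc0
    | n + 1 => hrec n
  notMem_conwayL
    | 0 => by
      rw [conwayL_zero, mem_bot]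
      rintro ⟨z, hz⟩
      have hnoroot : ∀ z : ZMod 2, z ^ 2 + z + 1 ≠ 0 := by decide
      refine hnoroot z ((algebraMap (ZMod 2) F).injective ?_)
      rwa [map_add, map_add, map_pow, map_one, map_zero, hz]
    | n + 1 => hnot n

theorem natCard_conwayL (h : IsConwayTower c) (n : ℕ) : Nat.card (conwayL c n) = 2 ^ 2 ^ n := by
  induction n with
  | zero => simp [conwayL_zero, Nat.card_congr (botEquiv (ZMod 2) F).toEquiv]
  | succ n ih =>
    have hdeg : Module.finrank (conwayL c n) (conwayL c n)⟮c n⟯ = 2 :=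
      finrank_adjoin_eq_two_of_sq_add_self_add_eq_zero (a := ⟨_, prod_mem_conwayL c n⟩)
        (h.sq_add_self_add_prod_eq_zero n) (by simpa using h.notMem_conwayL n)
    have : Module.Finite (conwayL c n) (conwayL c n)⟮c n⟯ :=
      Module.finite_of_finrank_pos (by rw [hdeg]; exact two_pos)
    rw [conwayL_succ]
    change Nat.card (conwayL c n)⟮c n⟯ = _
    rw [Module.natCard_eq_pow_finrank (K := conwayL c n), hdeg, ih, ← pow_mul, pow_succ]

theorem pow_fermatN (h : IsConwayTower c) (n : ℕ) :
    c n ^ fermatN n = ∏ j ∈ Finset.range n, c j := by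
  have : Finite (conwayL c n).toSubfield := inferInstanceAs (Finite (conwayL c n))
  have hcard : Nat.card (conwayL c n).toSubfield = 2 ^ 2 ^ n := h.natCard_conwayL n
  rw [fermatN, ← hcard]
  exact pow_natCard_add_one_eq_of_sq_add_self_add_eq_zero 2 _ (prod_mem_conwayL c n)
    (h.sq_add_self_add_prod_eq_zero n) (h.notMem_conwayL n)

theorem isLeast_fermatN_of_prime (h : IsConwayTower c) {n : ℕ} (hp : (fermatN n).Prime) :
    IsLeast {m | 0 < m ∧ c n ^ m ∈ conwayL c n} (fermatN n) :=
  isLeast_pow_mem_of_prime hp (h.pow_fermatN n ▸ prod_mem_conwayL c n) (h.notMem_conwayL n)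

theorem orderOf_eq_fermatN_mul (h : IsConwayTower c) {n : ℕ}
    (hmin : IsLeast {m | 0 < m ∧ c n ^ m ∈ conwayL c n} (fermatN n)) :
    orderOf (c n) = fermatN n * orderOf (∏ j ∈ Finset.range n, c j) := by
  have hne : c n ≠ 0 := fun h0 => h.notMem_conwayL n (h0 ▸ zero_mem _)
  rw [orderOf_eq_mul_orderOf_pow_of_isLeast hne hmin, h.pow_fermatN]

theorem orderOf_prod_range_succ (h : IsConwayTower c) (n : ℕ) :
    orderOf (∏ j ∈ Finset.range (n + 1), c j) =
      orderOf (c n) / (orderOf (c n)).gcd (fermatN n + 1) := by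
  rw [Finset.prod_range_succ, ← h.pow_fermatN, ← pow_succ, orderOf_pow' _ (Nat.succ_ne_zero _)]

theorem orderOf_prod_range_succ_eq_prod_fermatN (h : IsConwayTower c) {n : ℕ} (hn : 1 ≤ n)
    (hmin : ∀ j ≤ n, IsLeast {m | 0 < m ∧ c j ^ m ∈ conwayL c j} (fermatN j)) :
    orderOf (∏ j ∈ Finset.range (n + 1), c j) = ∏ j ∈ Finset.Icc 1 n, fermatN j := by
  induction n, hn using Nat.le_induction with
  | base =>
    -- `O(a_1) = 15 / gcd 15 6 = 5`: the factor `O(c_0) = 3` drops out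
    rw [h.orderOf_prod_range_succ, h.orderOf_eq_fermatN_mul (hmin 1 le_rfl),
      Finset.prod_range_one, h.orderOf_eq_fermatN_mul (hmin 0 (Nat.zero_le 1))]
    norm_num [fermatN]
  | succ n hn ih =>
    rw [h.orderOf_prod_range_succ, h.orderOf_eq_fermatN_mul (hmin (n + 1) le_rfl),
      ih fun j hj => hmin j (hj.trans n.le_succ), mul_comm, ← Finset.prod_Icc_succ_top (by omega),
      (coprime_prod_fermatN_fermatN_add_one _).gcd_eq_one, Nat.div_one]

end IsConwayTower

end ConwayTower

/-- Let `i ≥ 5`, and suppose that for every `j` with `5 ≤ j ≤ i`, the Fermat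
number `N_j` is the smallest positive integer `m` with `(c_j)^m ∈ L_{j−1}`
(here `conwayL c j` denotes `L_{j-1}`). Then
`O(a_i) = O(c_i) = ∏_{j=1}^{i} N_j`, where `a_i = ∏_{j=0}^{i} c_j`. -/
theorem conway_order_eq_of_minimal (c : ℕ → AlgebraicClosure (ZMod 2))
    (hc0 : c 0 ^ 2 + c 0 + 1 = 0)
    (hrec : ∀ i : ℕ, c (i + 1) ^ 2 + c (i + 1) + ∏ j ∈ Finset.range (i + 1), c j = 0)
    (hnot : ∀ i : ℕ, c (i + 1) ∉ conwayL c (i + 1))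
    (i : ℕ) (hi : 5 ≤ i)
    (hmin : ∀ j : ℕ, 5 ≤ j → j ≤ i →
      IsLeast {m : ℕ | 0 < m ∧ c j ^ m ∈ conwayL c j} (fermatN j)) :
    orderOf (∏ j ∈ Finset.range (i + 1), c j) = ∏ j ∈ Finset.Icc 1 i, fermatN j ∧
    orderOf (c i) = ∏ j ∈ Finset.Icc 1 i, fermatN j := by
  have h := IsConwayTower.mk' hc0 hrec hnot
  have hleast : ∀ j ≤ i, IsLeast {m | 0 < m ∧ c j ^ m ∈ conwayL c j} (fermatN j) := fun j hj =>
    if hj4 : j ≤ 4 then h.isLeast_fermatN_of_prime (fermatN_prime_of_le_four hj4)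
    else hmin j (by omega) hj
  refine ⟨h.orderOf_prod_range_succ_eq_prod_fermatN (by omega) hleast, ?_⟩
  obtain ⟨k, rfl⟩ : ∃ k, i = k + 1 := ⟨i - 1, by omega⟩
  rw [h.orderOf_eq_fermatN_mul (hleast _ le_rfl),
    h.orderOf_prod_range_succ_eq_prod_fermatN (by omega) fun j hj => hleast j (by omega),
    Finset.prod_Icc_succ_top (by omega), mul_comm]
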